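/- arXiv:2012.03917 — 8 statements merged into one kernel-verified Lean document; each statement's English description precedes it below -/
import Mathlib

section
/- Let (Ω, F, P) be a probability space, G ⊆ F a sub-σ-algebra, and (X_i)_{i ∈ ℕ} a family of random variables taking values in {0,1} which are conditionally independent given G. Let 𝒵 := ∑_{i ∈ ℕ} X_i and let Z := E[𝒵 | G] = ∑_{i ∈ ℕ} P(X_i = 1 | G) be a G-measurable version of the conditional expectation, and assume Z < ∞ almost surely. Then for every K > 0, P(Z ≥ K) ≤ 4/K + P(𝒵 ≥ K/2). -/
open MeasureTheory ProbabilityTheory Filter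
open scoped ENNReal NNReal Topology

set_option maxHeartbeats 1000000

lemma bernoulli_core {Ω : Type*} [MeasurableSpace Ω] (ν : Measure Ω) [IsProbabilityMeasure ν]
    (X : ℕ → Ω → ℝ≥0∞) (hXmeas : ∀ i, Measurable (X i))
    (hX01 : ∀ i ω, X i ω = 0 ∨ X i ω = 1)
    (hind : iIndepSet (fun i => X i ⁻¹' {1}) ν)
    (z : ℝ≥0∞) (hz : z = ∑' i, ν (X i ⁻¹' {1})) (hzfin : z ≠ ⊤)
    (K : ℝ) (hK : 0 < K) (hKz : ENNReal.ofReal K ≤ z) :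
    ν {ω | ∑' i, X i ω < ENNReal.ofReal (K / 2)} ≤ ENNReal.ofReal (4 / K) := by
  classical
  set A := fun i => X i ⁻¹' {1} with hAdef
  have hA : ∀ i, MeasurableSet (A i) := fun i => hXmeas i (measurableSet_singleton 1)
  set q := fun i => (ν (A i)).toReal with hqdef
  have hq0 : ∀ i, 0 ≤ q i := fun i => ENNReal.toReal_nonneg
  set Y := fun i => (A i).indicator (fun _ : Ω => (1 : ℝ)) with hYdef
  have hYmeas : ∀ i, Measurable (Y i) := fun i => measurable_const.indicator (hA i)
  have hYval : ∀ i ω, Y i ω = (X i ω).toReal := by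
    intro i ω
    rcases hX01 i ω with h | h
    · have : ω ∉ A i := by simp [hAdef, h]
      simp [hYdef, Set.indicator_of_notMem this, h]
    · have : ω ∈ A i := by simp [hAdef, h]
      simp [hYdef, Set.indicator_of_mem this, h]
  have hYmem : ∀ i, MemLp (Y i) 2 ν := by
    intro i
    refine MemLp.of_bound ((hYmeas i).aestronglyMeasurable) 1 ?_
    filter_upwards with ω
    rcases hX01 i ω with h | h <;> simp [hYval i ω, h]
  have hYint : ∀ i, ∫ x, Y i x ∂ν = q i := by
    intro i
    rw [hYdef]
    simp [integral_indicator_const (1 : ℝ) (hA i), hqdef, Measure.real]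
  have hYvar : ∀ i, variance (Y i) ν ≤ q i := by
    intro i
    have hsq : (fun ω => Y i ω ^ 2) = Y i := by
      funext ω
      by_cases h : ω ∈ A i <;> simp [hYdef, Set.indicator_of_mem, Set.indicator_of_notMem, h]
    rw [variance_eq_sub (hYmem i)]
    have : ∫ x, (Y i ^ 2) x ∂ν = q i := by
      simp only [Pi.pow_apply]
      rw [show (fun x => Y i x ^ 2) = Y i from hsq] at *
      exact hYint i
    rw [this, hYint i]
    nlinarith [hq0 i, sq_nonneg (q i)]
  have hYindep : ∀ i j, i ≠ j → IndepFun (Y i) (Y j) ν := by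
    intro i j hij
    exact (iIndepSet.iIndepFun_indicator hind).indepFun hij
  set S := fun n => ∑ i ∈ Finset.range n, Y i with hSdef
  have hSapp : ∀ n ω, S n ω = ∑ i ∈ Finset.range n, Y i ω := by
    intro n ω; simp [hSdef]
  have hSmem : ∀ n, MemLp (S n) 2 ν := fun n => memLp_finset_sum' _ fun i _ => hYmem i
  set m := fun n => ∑ i ∈ Finset.range n, q i with hmdef
  have hSint : ∀ n, ∫ x, S n x ∂ν = m n := by
    intro n
    simp only [hSapp]
    rw [integral_finset_sum _ (fun i _ => (hYmem i).integrable one_le_two), hmdef]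
    exact Finset.sum_congr rfl fun i _ => hYint i
  have hSvar : ∀ n, variance (S n) ν ≤ m n := by
    intro n
    rw [hSdef, IndepFun.variance_sum (fun i _ => hYmem i)
      (by intro i _ j _ hij; exact hYindep i j hij)]
    exact Finset.sum_le_sum fun i _ => hYvar i
  have hSX : ∀ n ω, S n ω = (∑ i ∈ Finset.range n, X i ω).toReal := by
    intro n ω
    rw [hSapp, ENNReal.toReal_sum]
    · exact Finset.sum_congr rfl fun i _ => hYval i ω
    · intro i _
      rcases hX01 i ω with h | h <;> simp [h]
  -- Chebyshev for each n with m n > K/2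
  have key : ∀ n, K / 2 < m n →
      ν {ω | ∑' i, X i ω < ENNReal.ofReal (K / 2)}
        ≤ ENNReal.ofReal (m n / (m n - K / 2) ^ 2) := by
    intro n hn
    have hc : 0 < m n - K / 2 := by linarith
    have hsub : {ω | ∑' i, X i ω < ENNReal.ofReal (K / 2)}
        ⊆ {ω | m n - K / 2 ≤ |S n ω - ∫ x, S n x ∂ν|} := by
      intro ω hω
      simp only [Set.mem_setOf_eq] at hω ⊢
      rw [hSint n]
      have hP : (∑ i ∈ Finset.range n, X i ω) < ENNReal.ofReal (K / 2) :=
        lt_of_le_of_lt (ENNReal.sum_le_tsum _) hω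
      have hPfin : (∑ i ∈ Finset.range n, X i ω) ≠ ⊤ := hP.ne_top
      have hPr : (∑ i ∈ Finset.range n, X i ω).toReal < K / 2 := by
        have := ENNReal.toReal_lt_toReal hPfin (ENNReal.ofReal_ne_top) |>.mpr hP
        rwa [ENNReal.toReal_ofReal (by linarith)] at this
      have hSlt : S n ω < K / 2 := by rw [hSX]; exact hPr
      have : m n - K / 2 ≤ -(S n ω - m n) := by linarith
      exact this.trans (neg_le_abs _)
    calc ν {ω | ∑' i, X i ω < ENNReal.ofReal (K / 2)}
        ≤ ν {ω | m n - K / 2 ≤ |S n ω - ∫ x, S n x ∂ν|} := measure_mono hsub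
      _ ≤ ENNReal.ofReal (variance (S n) ν / (m n - K / 2) ^ 2) :=
          meas_ge_le_variance_div_sq (hSmem n) hc
      _ ≤ ENNReal.ofReal (m n / (m n - K / 2) ^ 2) :=
          ENNReal.ofReal_le_ofReal ((div_le_div_iff_of_pos_right (by positivity)).mpr (hSvar n))
  -- limit argument
  set zr := z.toReal with hzrdef
  have hzK : K ≤ zr := by
    rw [hzrdef]
    exact (ENNReal.ofReal_le_iff_le_toReal hzfin).mp hKz
  have hm_tendsto : Tendsto m atTop (𝓝 zr) := by
    have hsum : ∑' i, ν (A i) ≠ ⊤ := by rw [← hz]; exact hzfin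
    have h1 : HasSum q (∑' i, q i) := ENNReal.hasSum_toReal hsum
    have h2 : (∑' i, q i) = zr := by
      rw [hzrdef, hz, ENNReal.tsum_toReal_eq fun i => (ne_top_of_le_ne_top hsum (ENNReal.le_tsum i))]
    rw [← h2]
    exact h1.tendsto_sum_nat
  have hzc : 0 < zr - K / 2 := by linarith
  have hlim : Tendsto (fun n => m n / (m n - K / 2) ^ 2) atTop
      (𝓝 (zr / (zr - K / 2) ^ 2)) := by
    refine Tendsto.div hm_tendsto ?_ (by positivity)
    exact (hm_tendsto.sub tendsto_const_nhds).pow 2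
  have hev : ∀ᶠ n in atTop, K / 2 < m n :=
    hm_tendsto.eventually (eventually_gt_nhds (by linarith))
  have hbound : ν {ω | ∑' i, X i ω < ENNReal.ofReal (K / 2)}
      ≤ ENNReal.ofReal (zr / (zr - K / 2) ^ 2) := by
    refine ge_of_tendsto (ENNReal.tendsto_ofReal hlim) ?_
    filter_upwards [hev] with n hn using key n hn
  refine hbound.trans (ENNReal.ofReal_le_ofReal ?_)
  rw [div_le_div_iff₀ (by positivity) hK]
  nlinarith [mul_nonneg (sub_nonneg.mpr hzK) (by linarith : (0:ℝ) ≤ 4 * zr - K)]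


/-- Key comparison (3.4) of the paper: for a family of Bernoulli random variables `Xᵢ`
that are conditionally independent given a sub-σ-algebra `G`, setting `𝒵 = ∑ᵢ Xᵢ` and
`Z = E[𝒵 | G] = ∑ᵢ P(Xᵢ = 1 | G)` (a `G`-measurable version, finite a.s.), one has
`P(Z ≥ K) ≤ 4/K + P(𝒵 ≥ K/2)` for every `K > 0`. -/
theorem cond_bernoulli_comparison
    {Ω : Type*} (G : MeasurableSpace Ω) [mΩ : MeasurableSpace Ω] [StandardBorelSpace Ω] [Nonempty Ω]
    (μ : Measure Ω) [IsProbabilityMeasure μ]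
    (hG : G ≤ mΩ)
    (X : ℕ → Ω → ℝ≥0∞) (hXmeas : ∀ i, Measurable (X i))
    (hX01 : ∀ i ω, X i ω = 0 ∨ X i ω = 1)
    (hindep : iCondIndepFun G hG X μ)
    (Z : Ω → ℝ≥0∞) (hZmeas : Measurable[G] Z)
    (hZ : ∀ᵐ ω ∂μ, Z ω = ∑' i, condExpKernel (mΩ := mΩ) μ G ω {ω' | X i ω' = 1})
    (hZfin : ∀ᵐ ω ∂μ, Z ω < ⊤)
    (K : ℝ) (hK : 0 < K) :
    μ {ω | ENNReal.ofReal K ≤ Z ω}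
      ≤ ENNReal.ofReal (4 / K) + μ {ω | ENNReal.ofReal (K / 2) ≤ ∑' i, X i ω} := by
  classical
  letI : MeasurableSpace Ω := mΩ
  set κ := condExpKernel (mΩ := mΩ) μ G with hκdef
  have hXm : ∀ i, Measurable[mΩ] (X i) := fun i => (hXmeas i)
  set A := fun i => X i ⁻¹' {1} with hAdef
  have hA : ∀ i, MeasurableSet[mΩ] (A i) := fun i => hXm i (measurableSet_singleton 1)
  have hker : ProbabilityTheory.Kernel.iIndepFun X κ (μ.trim hG) :=
    hindep
  have h1 : ∀ S : Finset ℕ, ∀ᵐ ω ∂μ, κ ω (⋂ i ∈ S, A i) = ∏ i ∈ S, κ ω (A i) := by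
    intro S
    refine ae_of_ae_trim hG ?_
    exact (ProbabilityTheory.Kernel.iIndepFun_iff_measure_inter_preimage_eq_mul
        (fun _ : ℕ => (inferInstance : MeasurableSpace ℝ≥0∞)) X).mp hker S
      (sets := fun _ => ({1} : Set ℝ≥0∞)) (fun i _ => measurableSet_singleton 1)
  have h2 : ∀ᵐ ω ∂μ, ∀ S : Finset ℕ, κ ω (⋂ i ∈ S, A i) = ∏ i ∈ S, κ ω (A i) :=
    ae_all_iff.mpr h1
  set Zf := fun ω => ∑' i, X i ω with hZf
  have hZfmeas : Measurable[mΩ] Zf := Measurable.ennreal_tsum hXm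
  set B := {ω | ENNReal.ofReal (K / 2) ≤ Zf ω} with hB
  have hBmeas : MeasurableSet[mΩ] B := measurableSet_le measurable_const hZfmeas
  set C := {ω | ENNReal.ofReal K ≤ Z ω} with hC
  have hCG : MeasurableSet[G] C := measurableSet_le measurable_const hZmeas
  have hCmeas : MeasurableSet[mΩ] C := hG _ hCG
  have hDeq : Bᶜ = {ω | Zf ω < ENNReal.ofReal (K / 2)} := by
    ext ω; simp [hB, not_le]
  have hkey : ∀ᵐ ω ∂μ, ω ∈ C → κ ω Bᶜ ≤ ENNReal.ofReal (4 / K) := by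
    filter_upwards [h2, hZ, hZfin] with ω hω hZω hZfinω hωC
    haveI : IsProbabilityMeasure (κ ω) := IsMarkovKernel.isProbabilityMeasure _
    have hind : ProbabilityTheory.iIndepSet A (κ ω) :=
      (ProbabilityTheory.iIndepSet_iff_meas_biInter (μ := κ ω) hA).mpr hω
    have := bernoulli_core (κ ω) X hXm hX01 hind (Z ω) hZω hZfinω.ne K hK hωC
    rw [hDeq]
    exact this
  have hcond : (fun ω => (κ ω Bᶜ).toReal) =ᵐ[μ] μ[Bᶜ.indicator (fun _ => (1 : ℝ)) | G] :=
    condExpKernel_ae_eq_condExp (μ := μ) hG hBmeas.compl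
  have hint : Integrable (fun ω => (κ ω Bᶜ).toReal) μ :=
    integrable_toReal_condExpKernel hBmeas.compl
  have hsetint : ∫ ω in C, (κ ω Bᶜ).toReal ∂μ = (μ (Bᶜ ∩ C)).toReal := by
    rw [integral_congr_ae (ae_restrict_of_ae hcond)]
    rw [setIntegral_condExp hG ((integrable_const (1 : ℝ)).indicator hBmeas.compl) hCG]
    rw [integral_indicator_const (1 : ℝ) hBmeas.compl, Measure.real, Measure.restrict_apply hBmeas.compl]
    simp
  have hμtoReal : (μ (Bᶜ ∩ C)).toReal ≤ 4 / K := by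
    rw [← hsetint]
    have hb : ∀ᵐ ω ∂μ.restrict C, (κ ω Bᶜ).toReal ≤ 4 / K := by
      filter_upwards [ae_restrict_of_ae hkey, ae_restrict_mem hCmeas] with ω hω hωC
      have := hω hωC
      calc (κ ω Bᶜ).toReal ≤ (ENNReal.ofReal (4 / K)).toReal :=
            ENNReal.toReal_mono ENNReal.ofReal_ne_top this
        _ = 4 / K := ENNReal.toReal_ofReal (by positivity)
    calc ∫ ω in C, (κ ω Bᶜ).toReal ∂μ
        ≤ ∫ _ in C, (4 / K) ∂μ := integral_mono_ae hint.restrict (integrable_const _) hb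
      _ = (μ C).toReal * (4 / K) := by simp [mul_comm, Measure.real]
      _ ≤ 1 * (4 / K) := by
          apply mul_le_mul_of_nonneg_right _ (by positivity)
          exact ENNReal.toReal_le_of_le_ofReal one_pos.le (by simpa using prob_le_one)
      _ = 4 / K := one_mul _
  have hmain : μ (Bᶜ ∩ C) ≤ ENNReal.ofReal (4 / K) := by
    rw [← ENNReal.ofReal_toReal (measure_ne_top μ (Bᶜ ∩ C))]
    exact ENNReal.ofReal_le_ofReal hμtoReal
  calc μ C ≤ μ (C ∩ B) + μ (C \ B) := measure_le_inter_add_diff μ C B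
    _ ≤ μ B + ENNReal.ofReal (4 / K) := by
        refine add_le_add (measure_mono Set.inter_subset_right) ?_
        rw [Set.diff_eq, Set.inter_comm]
        exact hmain
    _ = ENNReal.ofReal (4 / K) + μ B := add_comm _ _
end

section
/- For all real constants A ≥ 0, K ≥ 0, c₁ > 0, c₂ > 0, there exist δ₀ ∈ (0,1) and c₄ > 0 such that for every δ ∈ (0, δ₀) and every t ≥ δ^{−5}, setting s := δ² t, one has for all x ∈ [−δ√t, A]: c₂ (log s − x − K) s^{−3/2} e^{√2 (x+K) − (x+K)²/(2s)} ≥ c₄ δ^{−3} · c₁ (log t − x − K) t^{−3/2} e^{√2 (x+K)}. -/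
/-!
Put `s = δ² t` and `y = x + K`. The power factors match exactly, `s^{-3/2} = δ^{-3} t^{-3/2}`,
which produces the gain `δ^{-3}`. Take `δ < e^{-B}` with `B = A + K + 1`; from `t ≥ δ^{-5}` we get
`log s = log t + 2 log δ ≥ (3/5) log t` and `log t ≥ 5B`. So `log s - y ≥ (2/5)(log t - y)`,
and `s ≥ e^{3B} ≥ B²`. Then `y ∈ [-√s, √s]`, so the Gaussian correction `e^{-y²/(2s)}` is at
least `e^{-1/2}`.
-/

open Real

noncomputable def tailUpperBound (c K t x : ℝ) : ℝ :=
  c * (log t - x - K) * t ^ (-(3 / 2) : ℝ) * exp (√2 * (x + K))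

noncomputable def tailLowerBound (c K s x : ℝ) : ℝ :=
  c * (log s - x - K) * s ^ (-(3 / 2) : ℝ) * exp (√2 * (x + K) - (x + K) ^ 2 / (2 * s))

lemma sq_le_exp_two_mul {B : ℝ} (hB : 0 ≤ B) : B ^ 2 ≤ exp (2 * B) := by
  calc B ^ 2 ≤ exp B ^ 2 := pow_le_pow_left₀ hB (by linarith [add_one_le_exp B]) 2
    _ = exp (2 * B) := by rw [← exp_nat_mul]; norm_num

lemma sq_le_sq_of_neg_le_of_le {a y B : ℝ} (ha : 0 ≤ a) (hB : B ^ 2 ≤ a ^ 2) (h₁ : -a ≤ y)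
    (h₂ : y ≤ B) : y ^ 2 ≤ a ^ 2 :=
  sq_le_sq' h₁ (h₂.trans (abs_le_of_sq_le_sq' hB ha).2)

lemma rpow_neg_three_halves_sq_mul {δ t : ℝ} (hδ : 0 ≤ δ) (ht : 0 ≤ t) :
    (δ ^ 2 * t) ^ (-(3 / 2) : ℝ) = δ ^ (-3 : ℤ) * t ^ (-(3 / 2) : ℝ) := by
  rw [mul_rpow (by positivity) ht, ← rpow_natCast, ← rpow_mul hδ, ← rpow_intCast]
  norm_num

lemma tailUpperBound_eq_mul (c K t x : ℝ) :
    tailUpperBound c K t x = c * tailUpperBound 1 K t x := by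
  unfold tailUpperBound; ring

lemma tailLowerBound_eq (c K s x : ℝ) :
    tailLowerBound c K s x = exp (-((x + K) ^ 2 / (2 * s))) * tailUpperBound c K s x := by
  unfold tailLowerBound tailUpperBound
  rw [sub_eq_add_neg (√2 * (x + K)), exp_add]
  ring

lemma exp_neg_half_mul_tailUpperBound_le {c K s x : ℝ} (hc : 0 ≤ c) (hs : 0 < s)
    (hlog : x + K ≤ log s) (hsq : (x + K) ^ 2 ≤ s) :
    exp (-(1 / 2)) * tailUpperBound c K s x ≤ tailLowerBound c K s x := by
  rw [tailLowerBound_eq]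
  have hU : 0 ≤ tailUpperBound c K s x := by
    unfold tailUpperBound
    have : 0 ≤ log s - x - K := by linarith
    positivity
  refine mul_le_mul_of_nonneg_right (exp_le_exp.2 ?_) hU
  rw [neg_le_neg_iff, div_le_iff₀ (by positivity)]
  linarith

lemma tailUpperBound_le_sq_mul {c K δ t x : ℝ} (hc : 0 ≤ c) (hδ : 0 ≤ δ) (ht : 0 ≤ t)
    (hlog : 2 / 5 * (log t - x - K) ≤ log (δ ^ 2 * t) - x - K) :
    2 / 5 * δ ^ (-3 : ℤ) * tailUpperBound c K t x ≤ tailUpperBound c K (δ ^ 2 * t) x := by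
  unfold tailUpperBound
  rw [rpow_neg_three_halves_sq_mul hδ ht]
  have hP : 0 ≤ c * δ ^ (-3 : ℤ) * t ^ (-(3 / 2) : ℝ) * exp (√2 * (x + K)) := by positivity
  calc 2 / 5 * δ ^ (-3 : ℤ) *
        (c * (log t - x - K) * t ^ (-(3 / 2) : ℝ) * exp (√2 * (x + K)))
      = (2 / 5 * (log t - x - K)) * (c * δ ^ (-3 : ℤ) * t ^ (-(3 / 2) : ℝ) *
          exp (√2 * (x + K))) := by ring
    _ ≤ (log (δ ^ 2 * t) - x - K) * (c * δ ^ (-3 : ℤ) * t ^ (-(3 / 2) : ℝ) *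
          exp (√2 * (x + K))) := mul_le_mul_of_nonneg_right hlog hP
    _ = _ := by ring

/-- Analytic content of Lemma 3.5 (ratio-R): for `s = δ² t`, uniformly over
`x ∈ [−δ√t, A]`, the lower bound on `P(x + M_s − √2 s ≥ −K)` dominates
`c₄ δ⁻³` times the upper bound on `P(x + M_t − √2 t ≥ −K)`. -/
theorem ratio_R_estimate (A K c₁ c₂ : ℝ) (hA : 0 ≤ A) (hK : 0 ≤ K)
    (hc₁ : 0 < c₁) (hc₂ : 0 < c₂) :
    ∃ δ₀ ∈ Set.Ioo (0 : ℝ) 1, ∃ c₄ > (0 : ℝ),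
      ∀ δ ∈ Set.Ioo (0 : ℝ) δ₀, ∀ t : ℝ, δ ^ (-5 : ℤ) ≤ t →
        ∀ x ∈ Set.Icc (-(δ * Real.sqrt t)) A,
          c₄ * δ ^ (-3 : ℤ) *
              (c₁ * (Real.log t - x - K) * t ^ (-(3 / 2) : ℝ) *
                Real.exp (Real.sqrt 2 * (x + K)))
            ≤ c₂ * (Real.log (δ ^ 2 * t) - x - K) * (δ ^ 2 * t) ^ (-(3 / 2) : ℝ) *
                Real.exp (Real.sqrt 2 * (x + K) - (x + K) ^ 2 / (2 * (δ ^ 2 * t))) := by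
  set B := A + K + 1
  refine ⟨exp (-B), ⟨exp_pos _, exp_lt_one_iff.2 (by linarith)⟩,
    2 / 5 * exp (-(1 / 2)) * c₂ / c₁, by positivity, ?_⟩
  rintro δ ⟨hδ, hδB⟩ t ht x ⟨hx₁, hx₂⟩
  have ht₀ : 0 < t := (zpow_pos hδ _).trans_le ht
  have hs : 0 < δ ^ 2 * t := by positivity
  have hlogδ : B < -log δ := by linarith [(log_lt_iff_lt_exp hδ).2 hδB]
  have hlogt : -5 * log δ ≤ log t := by
    simpa [log_zpow] using log_le_log (zpow_pos hδ _) ht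
  have hlogs : log (δ ^ 2 * t) = 2 * log δ + log t := by
    rw [log_mul (by positivity) ht₀.ne', log_pow]; push_cast; ring
  have hBs : B ^ 2 ≤ (δ * √t) ^ 2 := by
    rw [mul_pow, sq_sqrt ht₀.le, ← exp_log hs]
    exact (sq_le_exp_two_mul (by positivity)).trans (exp_le_exp.2 (by linarith))
  have hsq : (x + K) ^ 2 ≤ δ ^ 2 * t := by
    simpa [mul_pow, sq_sqrt ht₀.le] using
      sq_le_sq_of_neg_le_of_le (by positivity) hBs (by linarith) (by linarith)
  change _ * tailUpperBound c₁ K t x ≤ tailLowerBound c₂ K (δ ^ 2 * t) x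
  calc 2 / 5 * exp (-(1 / 2)) * c₂ / c₁ * δ ^ (-3 : ℤ) * tailUpperBound c₁ K t x
      = exp (-(1 / 2)) * (2 / 5 * δ ^ (-3 : ℤ) * tailUpperBound c₂ K t x) := by
        rw [tailUpperBound_eq_mul c₁, tailUpperBound_eq_mul c₂]; field_simp
    _ ≤ exp (-(1 / 2)) * tailUpperBound c₂ K (δ ^ 2 * t) x := by
        gcongr
        exact tailUpperBound_le_sq_mul hc₂.le hδ.le ht₀.le (by linarith)
    _ ≤ tailLowerBound c₂ K (δ ^ 2 * t) x :=
        exp_neg_half_mul_tailUpperBound_le hc₂.le hs (by linarith) hsq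
end

section
/- For every δ ∈ (0, 1/8), K ≥ 0 and c₁ > 0, there exists t₀ > 0 such that for all t ≥ t₀ the following holds. Set r := √t. For every measurable function u : (0,∞) → [0,∞) satisfying u(y) ≤ c₁ (y + log r) r^{−3/2} e^{−√2 y − y²/(2r)} for all y > 0, and for every x ≤ −√t/δ, one has (e^{√2(x+K)} / √(2π(t−r))) · ∫₀^∞ u(y) e^{√2 y} e^{−(y+x+K)²/(2(t−r))} 1_{|y+x+K| ≤ √t/(3δ)} dy ≤ c₁ e^{√2 K} e^{√2 x − x²/(16 r)}. -/
/-!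
On the window `|y + x + K| ≤ r/(3δ)` with `x ≤ -r/δ` and `δ < 1/8`, one has `y ≥ -x/2 ≥ 4r`.
There the Gaussian factor is at most `1`, and since `8y² ≥ x² + 16ry`, the tail estimate's
`e^{-y²/(2r)}` is at most `e^{-x²/(16r)} e^{-y}`; with `y + log r ≤ 2y` and `y e^{-y} ≤ 2e^{-y/2}`
the integral is at most `8 c₁ e^{-x²/(16r)}`, and the prefactor `1/√(2π(t - r))` is below `1/8`
once `t` is large.
-/

open Real MeasureTheory

lemma mul_exp_neg_le_two_mul_exp_neg_half (y : ℝ) :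
    y * exp (-y) ≤ 2 * exp (-(1 / 2) * y) :=
  calc y * exp (-y) ≤ 2 * exp (y / 2) * exp (-y) := by
        gcongr; nlinarith [add_one_le_exp (y / 2)]
    _ = 2 * exp (-(1 / 2) * y) := by rw [mul_assoc, ← exp_add]; ring_nf

lemma integral_exp_neg_half_mul_Ioi_zero : ∫ y in Set.Ioi (0 : ℝ), exp (-(1 / 2) * y) = 2 := by
  rw [integral_exp_mul_Ioi (by norm_num)]
  norm_num

lemma exp_neg_sq_div_le {r x y : ℝ} (hr : 0 < r) (hry : 4 * r ≤ y) (hxy : |x| ≤ 2 * y) :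
    exp (-(y ^ 2 / (2 * r))) ≤ exp (-(x ^ 2 / (16 * r))) * exp (-y) := by
  rw [← exp_add, exp_le_exp, ← sub_nonneg]
  have h : -(x ^ 2 / (16 * r)) + -y - -(y ^ 2 / (2 * r)) =
      (4 * y ^ 2 - x ^ 2 + 4 * y * (y - 4 * r)) / (16 * r) := by
    field_simp
    ring
  have hx2 : x ^ 2 ≤ (2 * y) ^ 2 := sq_le_sq' (abs_le.mp hxy).1 (abs_le.mp hxy).2
  rw [h]
  exact div_nonneg (by nlinarith) (by positivity)

lemma mul_exp_le_of_le_tail_bound {c₁ r y v : ℝ} (hc₁ : 0 ≤ c₁) (hr : 1 ≤ r) (hry : r ≤ y)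
    (hv : v ≤ c₁ * (y + log r) * r ^ (-(3 / 2) : ℝ) * exp (-(√2 * y) - y ^ 2 / (2 * r))) :
    v * exp (√2 * y) ≤ 2 * c₁ * y * exp (-(y ^ 2 / (2 * r))) := by
  have hlog : log r ≤ y := (log_le_sub_one_of_pos (by linarith)).trans (by linarith)
  have hrpow : r ^ (-(3 / 2) : ℝ) ≤ 1 := rpow_le_one_of_one_le_of_nonpos hr (by norm_num)
  calc v * exp (√2 * y)
      ≤ c₁ * (y + log r) * r ^ (-(3 / 2) : ℝ) * exp (-(√2 * y) - y ^ 2 / (2 * r)) *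
          exp (√2 * y) := by gcongr
    _ = c₁ * (y + log r) * r ^ (-(3 / 2) : ℝ) * exp (-(y ^ 2 / (2 * r))) := by
        rw [mul_assoc, ← exp_add]; ring_nf
    _ ≤ c₁ * (2 * y) * 1 * exp (-(y ^ 2 / (2 * r))) := by
        have hy0 : 0 ≤ y := by linarith
        gcongr
        linarith
    _ = 2 * c₁ * y * exp (-(y ^ 2 / (2 * r))) := by ring

lemma abs_le_two_mul_and_four_mul_le_of_abs_add_le {δ K r x y : ℝ} (hδ : δ ∈ Set.Ioo (0 : ℝ) (1 / 8)) (hr : 0 ≤ r)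
    (hK : 6 * K ≤ r) (hx : x ≤ -(r / δ)) (hy : |y + x + K| ≤ r / (3 * δ)) :
    |x| ≤ 2 * y ∧ 4 * r ≤ y := by
  obtain ⟨hδ0, hδ8⟩ := hδ
  have hrx : r ≤ -x * δ := (div_le_iff₀ hδ0).mp (by linarith)
  have hwin : r / (3 * δ) ≤ -x / 3 := by
    rw [div_le_div_iff₀ (by positivity) (by norm_num)]
    linarith
  have h8 : 8 * r ≤ -x := by nlinarith
  refine ⟨abs_le.mpr ⟨?_, ?_⟩, ?_⟩ <;> linarith [(abs_le.mp hy).1]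

lemma truncated_integrand_le {δ K c₁ r s x y v : ℝ} (hδ : δ ∈ Set.Ioo (0 : ℝ) (1 / 8))
    (hc₁ : 0 ≤ c₁) (hr : 1 ≤ r) (hK : 6 * K ≤ r) (hs : 0 ≤ s) (hx : x ≤ -(r / δ)) (hv0 : 0 ≤ v)
    (hv : v ≤ c₁ * (y + log r) * r ^ (-(3 / 2) : ℝ) * exp (-(√2 * y) - y ^ 2 / (2 * r))) :
    v * exp (√2 * y) * exp (-(y + x + K) ^ 2 / (2 * s)) *
        (if |y + x + K| ≤ r / (3 * δ) then (1 : ℝ) else 0)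
      ≤ 4 * c₁ * exp (-(x ^ 2 / (16 * r))) * exp (-(1 / 2) * y) := by
  by_cases hwin : |y + x + K| ≤ r / (3 * δ)
  swap
  · rw [if_neg hwin, mul_zero]
    positivity
  rw [if_pos hwin, mul_one]
  obtain ⟨hxy, hry⟩ := abs_le_two_mul_and_four_mul_le_of_abs_add_le hδ (by linarith) hK hx hwin
  have hgauss : exp (-(y + x + K) ^ 2 / (2 * s)) ≤ 1 :=
    exp_le_one_iff.mpr (div_nonpos_of_nonpos_of_nonneg (by nlinarith) (by positivity))
  calc v * exp (√2 * y) * exp (-(y + x + K) ^ 2 / (2 * s))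
      ≤ v * exp (√2 * y) := mul_le_of_le_one_right (by positivity) hgauss
    _ ≤ 2 * c₁ * y * exp (-(y ^ 2 / (2 * r))) :=
        mul_exp_le_of_le_tail_bound hc₁ hr (by linarith) hv
    _ ≤ 2 * c₁ * y * (exp (-(x ^ 2 / (16 * r))) * exp (-y)) := by
        have hy0 : 0 ≤ y := by linarith
        gcongr
        exact exp_neg_sq_div_le (by linarith) hry hxy
    _ = 2 * c₁ * exp (-(x ^ 2 / (16 * r))) * (y * exp (-y)) := by ring
    _ ≤ 2 * c₁ * exp (-(x ^ 2 / (16 * r))) * (2 * exp (-(1 / 2) * y)) :=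
        mul_le_mul_of_nonneg_left (mul_exp_neg_le_two_mul_exp_neg_half y) (by positivity)
    _ = 4 * c₁ * exp (-(x ^ 2 / (16 * r))) * exp (-(1 / 2) * y) := by ring

lemma truncated_integral_le {δ K c₁ r s x : ℝ} {u : ℝ → ℝ} (hδ : δ ∈ Set.Ioo (0 : ℝ) (1 / 8))
    (hc₁ : 0 ≤ c₁) (hr : 1 ≤ r) (hK : 6 * K ≤ r) (hs : 0 ≤ s) (hx : x ≤ -(r / δ))
    (hu0 : ∀ y, 0 < y → 0 ≤ u y)
    (hu : ∀ y, 0 < y →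
      u y ≤ c₁ * (y + log r) * r ^ (-(3 / 2) : ℝ) * exp (-(√2 * y) - y ^ 2 / (2 * r))) :
    ∫ y in Set.Ioi (0 : ℝ), u y * exp (√2 * y) * exp (-(y + x + K) ^ 2 / (2 * s)) *
        (if |y + x + K| ≤ r / (3 * δ) then (1 : ℝ) else 0)
      ≤ 8 * c₁ * exp (-(x ^ 2 / (16 * r))) := by
  have hnonneg : ∀ y ∈ Set.Ioi (0 : ℝ), 0 ≤ u y * exp (√2 * y) *
      exp (-(y + x + K) ^ 2 / (2 * s)) * (if |y + x + K| ≤ r / (3 * δ) then (1 : ℝ) else 0) := by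
    intro y hy
    have := hu0 y hy
    split_ifs <;> positivity
  calc _ ≤ ∫ y in Set.Ioi (0 : ℝ), 4 * c₁ * exp (-(x ^ 2 / (16 * r))) * exp (-(1 / 2) * y) :=
        integral_mono_of_nonneg (ae_restrict_of_forall_mem measurableSet_Ioi hnonneg)
          ((exp_neg_integrableOn_Ioi 0 (by norm_num)).const_mul _)
          (ae_restrict_of_forall_mem measurableSet_Ioi fun y hy =>
            truncated_integrand_le hδ hc₁ hr hK hs hx (hu0 y hy) (hu y hy))
    _ = 8 * c₁ * exp (-(x ^ 2 / (16 * r))) := by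
        rw [integral_const_mul, integral_exp_neg_half_mul_Ioi_zero]
        ring

lemma eight_le_sqrt_two_pi_mul {s : ℝ} (hs : 11 ≤ s) : 8 ≤ √(2 * π * s) :=
  (le_sqrt' (by norm_num)).mpr (by nlinarith [pi_gt_three])

theorem psi_le_bound_general (δ K c₁ : ℝ) (hδ : δ ∈ Set.Ioo (0 : ℝ) (1 / 8))
    (hc₁ : 0 < c₁) :
    ∃ t₀ > (0 : ℝ), ∀ t ≥ t₀,
      ∀ u : ℝ → ℝ, Measurable u → (∀ y, 0 < y → 0 ≤ u y) →
        (∀ y, 0 < y →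
          u y ≤ c₁ * (y + Real.log (Real.sqrt t)) * (Real.sqrt t) ^ (-(3 / 2) : ℝ) *
            Real.exp (-(Real.sqrt 2 * y) - y ^ 2 / (2 * Real.sqrt t))) →
        ∀ x : ℝ, x ≤ -(Real.sqrt t / δ) →
          (Real.exp (Real.sqrt 2 * (x + K)) /
              Real.sqrt (2 * Real.pi * (t - Real.sqrt t))) *
            ∫ y in Set.Ioi (0 : ℝ),
              u y * Real.exp (Real.sqrt 2 * y) *
                Real.exp (-(y + x + K) ^ 2 / (2 * (t - Real.sqrt t))) *
                (if |y + x + K| ≤ Real.sqrt t / (3 * δ) then (1 : ℝ) else 0)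
            ≤ c₁ * Real.exp (Real.sqrt 2 * K) *
                Real.exp (Real.sqrt 2 * x - x ^ 2 / (16 * Real.sqrt t)) := by
  refine ⟨100 + 36 * K ^ 2, by positivity, fun t ht u _ hu0 hu x hx => ?_⟩
  have hsq : √t * √t = t := mul_self_sqrt (by nlinarith [sq_nonneg K])
  have hr : 10 ≤ √t := by nlinarith [sqrt_nonneg t]
  have hK : 6 * K ≤ √t := by nlinarith [sqrt_nonneg t]
  have hI := truncated_integral_le (K := K) (s := t - √t) hδ hc₁.le (by linarith) hK
    (by nlinarith) hx hu0 hu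
  calc _ ≤ exp (√2 * (x + K)) / √(2 * π * (t - √t)) * (8 * c₁ * exp (-(x ^ 2 / (16 * √t)))) := by
        gcongr
    _ ≤ exp (√2 * (x + K)) / 8 * (8 * c₁ * exp (-(x ^ 2 / (16 * √t)))) := by
        gcongr
        exact eight_le_sqrt_two_pi_mul (by nlinarith)
    _ = c₁ * exp (√2 * K) * exp (√2 * x - x ^ 2 / (16 * √t)) := by
        rw [mul_add, exp_add, sub_eq_add_neg, exp_add]
        ring

/-- Bound on the truncated ψ-function `ψ_≤(r,t,x)` from the proof of Lemma 3.6 (bd-L):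
with `r = √t`, for any measurable `u : (0,∞) → [0,∞)` dominated by the sharp tail
estimate `u(y) ≤ c₁ (y + log r) r^{−3/2} e^{−√2 y − y²/(2r)}`, and any `x ≤ −√t/δ`,
the truncated integral is at most `c₁ e^{√2 K} e^{√2 x − x²/(16 r)}`. -/
theorem psi_le_bound (δ K c₁ : ℝ) (hδ : δ ∈ Set.Ioo (0 : ℝ) (1 / 8)) (hK : 0 ≤ K)
    (hc₁ : 0 < c₁) :
    ∃ t₀ > (0 : ℝ), ∀ t ≥ t₀,
      ∀ u : ℝ → ℝ, Measurable u → (∀ y, 0 < y → 0 ≤ u y) →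
        (∀ y, 0 < y →
          u y ≤ c₁ * (y + Real.log (Real.sqrt t)) * (Real.sqrt t) ^ (-(3 / 2) : ℝ) *
            Real.exp (-(Real.sqrt 2 * y) - y ^ 2 / (2 * Real.sqrt t))) →
        ∀ x : ℝ, x ≤ -(Real.sqrt t / δ) →
          (Real.exp (Real.sqrt 2 * (x + K)) /
              Real.sqrt (2 * Real.pi * (t - Real.sqrt t))) *
            ∫ y in Set.Ioi (0 : ℝ),
              u y * Real.exp (Real.sqrt 2 * y) *
                Real.exp (-(y + x + K) ^ 2 / (2 * (t - Real.sqrt t))) *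
                (if |y + x + K| ≤ Real.sqrt t / (3 * δ) then (1 : ℝ) else 0)
            ≤ c₁ * Real.exp (Real.sqrt 2 * K) *
                Real.exp (Real.sqrt 2 * x - x ^ 2 / (16 * Real.sqrt t)) :=
  psi_le_bound_general δ K c₁ hδ hc₁
end

section
/- For every δ ∈ (0,1) and all constants 0 < A₁ < A₂ < ∞, one has lim_{t→∞} inf { e^{(x² − (y+x)²)/(16√t)} · (1/(y t^{1/4})) · (1 − e^{−2y(−x + (3/(2√2)) log(9√t))/(8√t)}) : y ∈ [A₁ t^{1/4}, A₂ t^{1/4}], x ≤ −√t/δ } = +∞. That is, for every M > 0 there exists t₀ such that for all t ≥ t₀, all y ∈ [A₁ t^{1/4}, A₂ t^{1/4}] and all x ≤ −√t/δ, the displayed expression is at least M. -/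
open Real Filter Topology

/-!
Write `q = t^{1/4}`, so that `√t = q²`. For large `t` the constraints give `A₁ q ≤ y ≤ √t ≤ -x`,
so `x² - (y + x)² = y (-2x - y) ≥ y √t` and the Gaussian factor is at least `e^{A₁ q / 16}`,
the prefactor `1/(y q)` is at least `1/q³`, and, since the logarithm is nonnegative, the last
factor is at least `1 - e^{-A₁ q / 4}`. The product of these three minorants is exponentially
large in `q`.
-/

noncomputable def kernelMinorant (a q : ℝ) : ℝ :=
  exp (a * q / 16) * (1 / q ^ 3) * (1 - exp (-(a * q) / 4))

theorem tendsto_kernelMinorant_atTop {a : ℝ} (ha : 0 < a) :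
    Tendsto (kernelMinorant a) atTop atTop := by
  have hgrowth : Tendsto (fun q : ℝ => exp (a * q / 16) * (1 / q ^ 3)) atTop atTop := by
    refine (tendsto_exp_mul_div_rpow_atTop 3 (a / 16) (by positivity)).congr fun q => ?_
    rw [show (3 : ℝ) = ((3 : ℕ) : ℝ) by norm_num, rpow_natCast]
    ring_nf
  have hdecay : Tendsto (fun q : ℝ => 1 - exp (-(a * q) / 4)) atTop (𝓝 1) := by
    have hexp : Tendsto (fun q : ℝ => exp (-(a * q) / 4)) atTop (𝓝 0) :=
      tendsto_exp_atBot.comp <|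
        (tendsto_neg_atTop_atBot.comp (tendsto_id.const_mul_atTop ha)).atBot_div_const
          (by norm_num)
    simpa using tendsto_const_nhds.sub hexp
  exact hgrowth.atTop_mul_pos one_pos hdecay

theorem kernelMinorant_le {a q y x L : ℝ} (ha : 0 < a) (hq : 0 < q) (hy : a * q ≤ y)
    (hyq : y ≤ q ^ 2) (hx : x ≤ -q ^ 2) (hL : q ^ 2 ≤ L) :
    kernelMinorant a q ≤ exp ((x ^ 2 - (y + x) ^ 2) / (16 * q ^ 2)) * (1 / (y * q)) *
      (1 - exp (-(2 * y) * L / (8 * q ^ 2))) := by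
  have hy_pos : 0 < y := by nlinarith
  have hgauss : a * q / 16 ≤ (x ^ 2 - (y + x) ^ 2) / (16 * q ^ 2) := by
    rw [le_div_iff₀ (by positivity)]
    nlinarith
  have hprefactor : y * q ≤ q ^ 3 := by nlinarith
  have hdrift : -(2 * y) * L / (8 * q ^ 2) ≤ -(a * q) / 4 := by
    rw [div_le_iff₀ (by positivity)]
    nlinarith
  have hmin : 0 ≤ 1 - exp (-(a * q) / 4) := by
    rw [sub_nonneg]; exact exp_le_one_iff.2 (by nlinarith)
  unfold kernelMinorant
  gcongr

theorem sqrt_eq_rpow_quarter_sq {t : ℝ} (ht : 0 ≤ t) : √t = (t ^ (1 / 4 : ℝ)) ^ 2 := by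
  rw [sqrt_eq_rpow, ← rpow_natCast, ← rpow_mul ht]
  norm_num

theorem uniform_divergence_general (δ A₁ A₂ : ℝ) (hδ : δ ∈ Set.Ioo (0 : ℝ) 1)
    (hA₁ : 0 < A₁) :
    ∀ M > (0 : ℝ), ∃ t₀ > (0 : ℝ), ∀ t ≥ t₀,
      ∀ y ∈ Set.Icc (A₁ * t ^ ((1 : ℝ) / 4)) (A₂ * t ^ ((1 : ℝ) / 4)),
        ∀ x : ℝ, x ≤ -(Real.sqrt t / δ) →
          M ≤ Real.exp ((x ^ 2 - (y + x) ^ 2) / (16 * Real.sqrt t)) *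
                (1 / (y * t ^ ((1 : ℝ) / 4))) *
                (1 - Real.exp (-(2 * y) *
                  (-x + 3 / (2 * Real.sqrt 2) * Real.log (9 * Real.sqrt t)) /
                    (8 * Real.sqrt t))) := by
  intro M _
  have hquarter : Tendsto (fun t : ℝ => t ^ (1 / 4 : ℝ)) atTop atTop :=
    tendsto_rpow_atTop (by norm_num)
  obtain ⟨t₀, ht₀⟩ := eventually_atTop.1 <| (hquarter.eventually_ge_atTop (max A₂ 1)).and <|
    hquarter.eventually ((tendsto_kernelMinorant_atTop hA₁).eventually_ge_atTop M)
  refine ⟨max t₀ 1, by positivity, fun t ht y ⟨hy₁, hy₂⟩ x hx => ?_⟩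
  obtain ⟨hq, hM⟩ := ht₀ t (le_of_max_le_left ht)
  set q := t ^ (1 / 4 : ℝ)
  have hq1 : 1 ≤ q := le_of_max_le_right hq
  rw [sqrt_eq_rpow_quarter_sq (by linarith [le_of_max_le_right ht])] at hx ⊢
  have hx' : x ≤ -q ^ 2 := by
    have : q ^ 2 ≤ q ^ 2 / δ := le_div_self (by positivity) hδ.1 hδ.2.le
    linarith
  have hlog : 0 ≤ log (9 * q ^ 2) := log_nonneg (by nlinarith)
  refine hM.trans (kernelMinorant_le hA₁ (by positivity) (by simpa using hy₁) ?_ hx' ?_)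
  · nlinarith [le_of_max_le_left hq]
  · have : 0 ≤ 3 / (2 * √2) * log (9 * q ^ 2) := by positivity
    linarith

/-- Key uniform divergence in the proof of Lemma 3.7 (small-term): uniformly over
`y ∈ [A₁ t^{1/4}, A₂ t^{1/4}]` and `x ≤ −√t/δ`, the quantity
`e^{(x² − (y+x)²)/(16√t)} · (1/(y t^{1/4})) · (1 − e^{−2y(−x + (3/(2√2)) log(9√t))/(8√t)})`
tends to `+∞` as `t → ∞`. -/
theorem uniform_divergence (δ A₁ A₂ : ℝ) (hδ : δ ∈ Set.Ioo (0 : ℝ) 1)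
    (hA₁ : 0 < A₁) (hA₁₂ : A₁ < A₂) :
    ∀ M > (0 : ℝ), ∃ t₀ > (0 : ℝ), ∀ t ≥ t₀,
      ∀ y ∈ Set.Icc (A₁ * t ^ ((1 : ℝ) / 4)) (A₂ * t ^ ((1 : ℝ) / 4)),
        ∀ x : ℝ, x ≤ -(Real.sqrt t / δ) →
          M ≤ Real.exp ((x ^ 2 - (y + x) ^ 2) / (16 * Real.sqrt t)) *
                (1 / (y * t ^ ((1 : ℝ) / 4))) *
                (1 - Real.exp (-(2 * y) *
                  (-x + 3 / (2 * Real.sqrt 2) * Real.log (9 * Real.sqrt t)) /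
                    (8 * Real.sqrt t))) :=
  uniform_divergence_general δ A₁ A₂ hδ hA₁
end

section
/- For every t > 0 and every β ∈ (0,1), there exist constants A > 0, C > 0 and K > 0 such that for all x ∈ ℝ with |x| ≥ A: (1/√(2πt)) ∫_ℝ e^{−β|x+z|^{3/2} − √2 z − z²/(2t)} dz ≤ C e^{−β|x|^{3/2} + K|x|}. -/
open Real MeasureTheory

/-!
Write `|x|^{3/2} ≤ |x+z|^{3/2} + 3|z|√|x|` and absorb both cross terms `3β|z|√|x|` and
`√2|z|` into the Gaussian factor by Young's inequality, at the price of `9β²t|x|` and a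
constant. What is left of the Gaussian is `e^{-z²/(8t)}`, whose integral `√(8πt)` cancels the
normalisation up to a factor `2`.
-/

lemma mul_le_mul_sq_add_sq_div {ε : ℝ} (hε : 0 < ε) (a b : ℝ) :
    a * b ≤ ε * a ^ 2 + b ^ 2 / (4 * ε) := by
  rw [← sub_nonneg]
  have key : ε * a ^ 2 + b ^ 2 / (4 * ε) - a * b = (2 * ε * a - b) ^ 2 / (4 * ε) := by
    field_simp
    ring
  rw [key]
  positivity

lemma rpow_three_halves_le_add_of_sub_le {a b d : ℝ} (ha : 0 ≤ a) (hb : 0 ≤ b) (hd : 0 ≤ d)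
    (h : a - b ≤ d) : a ^ ((3 : ℝ) / 2) ≤ b ^ ((3 : ℝ) / 2) + 3 * d * √a := by
  have three_halves (c : ℝ) (hc : 0 ≤ c) : c ^ ((3 : ℝ) / 2) = √c ^ 3 := by
    rw [rpow_div_two_eq_sqrt _ hc, ← rpow_natCast]
    norm_num
  rw [three_halves a ha, three_halves b hb]
  set s := √a
  set r := √b
  have hs : 0 ≤ s := sqrt_nonneg a
  have hr : 0 ≤ r := sqrt_nonneg b
  replace h : s ^ 2 - r ^ 2 ≤ d := by rwa [sq_sqrt ha, sq_sqrt hb]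
  rcases le_or_gt s r with hsr | hrs
  · nlinarith [mul_nonneg hd hs, pow_le_pow_left₀ hs hsr 3]
  · nlinarith [mul_nonneg (sq_nonneg (s - r)) (by linarith : (0 : ℝ) ≤ 2 * s + r),
      mul_nonneg (mul_nonneg hs hr) (by linarith : (0 : ℝ) ≤ s - r),
      mul_le_mul_of_nonneg_right h hs]

lemma abs_rpow_three_halves_le (x z : ℝ) :
    |x| ^ ((3 : ℝ) / 2) ≤ |x + z| ^ ((3 : ℝ) / 2) + 3 * |z| * √|x| := by
  refine rpow_three_halves_le_add_of_sub_le (abs_nonneg _) (abs_nonneg _) (abs_nonneg _) ?_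
  simpa using abs_sub_abs_le_abs_sub x (x + z)

lemma laplace_exponent_le {t β : ℝ} (ht : 0 < t) (hβ : 0 ≤ β) (x z : ℝ) :
    -β * |x + z| ^ ((3 : ℝ) / 2) - √2 * z - z ^ 2 / (2 * t)
      ≤ (-β * |x| ^ ((3 : ℝ) / 2) + 9 * β ^ 2 * t * |x| + 4 * t) - 1 / (8 * t) * z ^ 2 := by
  have hpow := mul_le_mul_of_nonneg_left (abs_rpow_three_halves_le x z) hβ
  have hcross := mul_le_mul_sq_add_sq_div ht (3 * β * √|x|) |z|
  have hdrift := mul_le_mul_sq_add_sq_div (by positivity : 0 < 2 * t) (√2) |z|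
  have hz : -(√2 * z) ≤ √2 * |z| := by
    nlinarith [neg_le_abs z, sqrt_nonneg 2]
  rw [mul_pow, mul_pow, sq_sqrt (abs_nonneg x)] at hcross
  rw [sq_sqrt zero_le_two, sq_abs] at hdrift
  rw [sq_abs] at hcross
  have hgauss : z ^ 2 / (4 * t) + z ^ 2 / (4 * (2 * t)) - z ^ 2 / (2 * t)
      = -(1 / (8 * t) * z ^ 2) := by
    field_simp
    ring
  linarith

lemma integral_le_mul_sqrt_of_le_gaussian {f : ℝ → ℝ} {M b : ℝ} (hb : 0 < b)
    (hf : ∀ z, ‖f z‖ ≤ M * exp (-b * z ^ 2)) :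
    ∫ z, f z ≤ M * √(π / b) := by
  rw [← integral_gaussian, ← integral_const_mul]
  exact (le_abs_self _).trans <| norm_integral_le_of_norm_le
    ((integrable_exp_neg_mul_sq hb).const_mul M) (Filter.Eventually.of_forall hf)

/-- Laplace-method estimate from the proof of Proposition 4.2: for every `t > 0` and
`β ∈ (0,1)`, for `|x|` large enough,
`(1/√(2πt)) ∫ e^{−β|x+z|^{3/2} − √2 z − z²/(2t)} dz ≤ C e^{−β|x|^{3/2} + K|x|}`. -/
theorem laplace_method_estimate (t β : ℝ) (ht : 0 < t) (hβ : β ∈ Set.Ioo (0 : ℝ) 1) :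
    ∃ A > (0 : ℝ), ∃ C > (0 : ℝ), ∃ K > (0 : ℝ), ∀ x : ℝ, A ≤ |x| →
      (1 / Real.sqrt (2 * Real.pi * t)) *
          ∫ z : ℝ,
            Real.exp (-β * |x + z| ^ ((3 : ℝ) / 2) - Real.sqrt 2 * z - z ^ 2 / (2 * t))
        ≤ C * Real.exp (-β * |x| ^ ((3 : ℝ) / 2) + K * |x|) := by
  refine ⟨1, one_pos, 2 * exp (4 * t), by positivity, 9 * β ^ 2 * t,
    by have := hβ.1; positivity, fun x _ => ?_⟩
  set c := -β * |x| ^ ((3 : ℝ) / 2) + 9 * β ^ 2 * t * |x|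
  have hint : ∫ z, exp (-β * |x + z| ^ ((3 : ℝ) / 2) - √2 * z - z ^ 2 / (2 * t))
      ≤ exp (c + 4 * t) * √(π / (1 / (8 * t))) := by
    refine integral_le_mul_sqrt_of_le_gaussian (by positivity) fun z => ?_
    rw [norm_of_nonneg (exp_pos _).le, ← exp_add]
    exact exp_le_exp.mpr ((laplace_exponent_le ht hβ.1.le x z).trans_eq (by ring))
  have hnorm : 1 / √(2 * π * t) * √(π / (1 / (8 * t))) = 2 := by
    rw [show π / (1 / (8 * t)) = 2 ^ 2 * (2 * π * t) by field_simp; ring,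
      sqrt_mul' (2 ^ 2) (by positivity : 0 ≤ 2 * π * t), sqrt_sq zero_le_two]
    have : 0 < √(2 * π * t) := by positivity
    field_simp
  calc 1 / √(2 * π * t) *
          ∫ z, exp (-β * |x + z| ^ ((3 : ℝ) / 2) - √2 * z - z ^ 2 / (2 * t))
      ≤ 1 / √(2 * π * t) * (exp (c + 4 * t) * √(π / (1 / (8 * t)))) := by gcongr
    _ = (1 / √(2 * π * t) * √(π / (1 / (8 * t)))) * exp (4 * t) * exp c := by
        rw [exp_add]; ring
    _ = 2 * exp (4 * t) * exp c := by rw [hnorm]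
end

section
/- Let μ be a Borel measure on ℝ and suppose there exists x₀ ≥ 0 such that μ([−x, ∞)) ≤ x³ e^{√2 x} for all x ≥ x₀. Then for every β > 0, ∫_ℝ e^{−β|x|^{3/2}} dμ(x) < ∞. -/
/-!
Cut the line into `[-a, ∞)` and the unit shells `(-(a+n+1), -(a+n)]`. The first piece has finite
mass, and on the `n`-th shell the integrand is at most `exp (-β (a+n)^{3/2})` while the shell has
mass at most `(a+n+1)^3 e^{√2 (a+n+1)} ≤ e^{(3+√2)(a+n+1)}`. Since `t^{3/2}` grows superlinearly,
for `a` large the product is at most `e^{-(a+n)}`, and the series converges.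
-/

open Real MeasureTheory Filter Set
open scoped ENNReal

lemma compl_Ici_neg_subset_iUnion_Ioc (a : ℝ) :
    (Ici (-a))ᶜ ⊆ ⋃ n : ℕ, Ioc (-(a + n + 1)) (-(a + n)) := by
  intro x hx
  rw [mem_compl_iff, mem_Ici, not_le] at hx
  refine mem_iUnion.2 ⟨⌊-x - a⌋₊, ?_, ?_⟩
  · linarith [Nat.lt_floor_add_one (-x - a)]
  · linarith [Nat.floor_le (by linarith : 0 ≤ -x - a)]

lemma lintegral_le_add_tsum_shells (μ : Measure ℝ) (f : ℝ → ℝ≥0∞) (a : ℝ) (C : ℝ≥0∞)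
    (u : ℕ → ℝ≥0∞) (hC : ∀ x ∈ Ici (-a), f x ≤ C)
    (hu : ∀ n : ℕ, ∀ x ∈ Ioc (-(a + n + 1)) (-(a + n)), f x ≤ u n) :
    ∫⁻ x, f x ∂μ ≤ C * μ (Ici (-a)) + ∑' n : ℕ, u n * μ (Ici (-(a + n + 1))) := by
  rw [← lintegral_add_compl f measurableSet_Ici]
  gcongr
  · calc ∫⁻ x in Ici (-a), f x ∂μ ≤ ∫⁻ _ in Ici (-a), C ∂μ :=
          setLIntegral_mono' measurableSet_Ici hC
      _ = C * μ (Ici (-a)) := setLIntegral_const _ _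
  · calc ∫⁻ x in (Ici (-a))ᶜ, f x ∂μ
        ≤ ∫⁻ x in ⋃ n : ℕ, Ioc (-(a + n + 1)) (-(a + n)), f x ∂μ :=
          lintegral_mono_set (compl_Ici_neg_subset_iUnion_Ioc a)
      _ ≤ ∑' n : ℕ, ∫⁻ x in Ioc (-(a + n + 1)) (-(a + n)), f x ∂μ := lintegral_iUnion_le _ _
      _ ≤ ∑' n : ℕ, u n * μ (Ici (-(a + n + 1))) := by
          refine ENNReal.tsum_le_tsum fun n => ?_
          calc ∫⁻ x in Ioc (-(a + n + 1)) (-(a + n)), f x ∂μ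
              ≤ ∫⁻ _ in Ioc (-(a + n + 1)) (-(a + n)), u n ∂μ :=
                setLIntegral_mono' measurableSet_Ioc (hu n)
            _ = u n * μ (Ioc (-(a + n + 1)) (-(a + n))) := setLIntegral_const _ _
            _ ≤ u n * μ (Ici (-(a + n + 1))) := by grw [Ioc_subset_Ioi_self, Ioi_subset_Ici_self]

lemma eventually_mul_add_one_sub_mul_rpow_le_neg {β p : ℝ} (hβ : 0 < β) (hp : 1 < p) (c : ℝ) :
    ∀ᶠ t in atTop, c * (t + 1) - β * t ^ p ≤ -t := by
  filter_upwards [(tendsto_rpow_atTop (sub_pos.2 hp)).eventually_ge_atTop ((2 * |c| + 1) / β),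
    eventually_ge_atTop 1] with t hlarge ht
  have hsplit : t ^ p = t ^ (p - 1) * t := by
    rw [rpow_sub_one (by positivity), div_mul_cancel₀ _ (by positivity)]
  have hβt : 2 * |c| + 1 ≤ β * t ^ (p - 1) := by rwa [div_le_iff₀' hβ] at hlarge
  have hc : c * (t + 1) ≤ 2 * |c| * t := by
    nlinarith [le_abs_self c, abs_nonneg c]
  rw [hsplit]
  nlinarith

lemma pow_mul_exp_le_exp {x : ℝ} (hx : 0 ≤ x) (k : ℕ) (c : ℝ) :
    x ^ k * exp (c * x) ≤ exp ((k + c) * x) := by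
  calc x ^ k * exp (c * x) ≤ exp x ^ k * exp (c * x) := by
        gcongr
        linarith [add_one_le_exp x]
    _ = exp ((k + c) * x) := by rw [← exp_nat_mul, ← exp_add]; ring_nf

theorem lintegral_exp_neg_mul_abs_rpow_lt_top_of_tail_le_exp (μ : Measure ℝ) {x₀ c β p : ℝ}
    (htail : ∀ x : ℝ, x₀ ≤ x → μ (Ici (-x)) ≤ ENNReal.ofReal (exp (c * x)))
    (hβ : 0 < β) (hp : 1 < p) :
    ∫⁻ x : ℝ, ENNReal.ofReal (exp (-β * |x| ^ p)) ∂μ < ⊤ := by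
  obtain ⟨a, ha⟩ := eventually_atTop.1 ((eventually_mul_add_one_sub_mul_rpow_le_neg hβ hp c).and
    (eventually_ge_atTop (max x₀ 0)))
  have hax₀ : x₀ ≤ a := (le_max_left _ _).trans (ha a le_rfl).2
  have ha0 : 0 ≤ a := (le_max_right _ _).trans (ha a le_rfl).2
  have hshell (n : ℕ) : ∀ x ∈ Ioc (-(a + n + 1)) (-(a + n)),
      ENNReal.ofReal (exp (-β * |x| ^ p)) ≤ ENNReal.ofReal (exp (-β * (a + n) ^ p)) := by
    intro x hx
    have han : 0 ≤ a + n := by positivity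
    have hax : a + n ≤ |x| := by rw [abs_of_nonpos (by linarith [hx.2])]; linarith [hx.2]
    simp only [neg_mul]
    gcongr
  have hterm (n : ℕ) : ENNReal.ofReal (exp (-β * (a + n) ^ p)) * μ (Ici (-(a + n + 1)))
      ≤ ENNReal.ofReal (exp (-1)) ^ n := by
    have hdecay := (ha (a + n) (by simp)).1
    grw [htail (a + n + 1) (by linarith [n.cast_nonneg (α := ℝ)]), ← ENNReal.ofReal_mul
      (exp_nonneg _), ← exp_add, ← ENNReal.ofReal_pow (exp_nonneg _), ← exp_nat_mul]
    gcongr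
    linarith
  have hbound := lintegral_le_add_tsum_shells μ (fun x => ENNReal.ofReal (exp (-β * |x| ^ p)))
    a 1 _ (fun x _ => ENNReal.ofReal_le_one.2 (exp_le_one_iff.2 (by
      nlinarith [rpow_nonneg (abs_nonneg x) p]))) hshell
  refine hbound.trans_lt (ENNReal.add_lt_top.2 ⟨?_, ?_⟩)
  · grw [one_mul, htail a hax₀]
    exact ENNReal.ofReal_lt_top
  · grw [ENNReal.tsum_le_tsum hterm]
    exact tsum_geometric_lt_top.2 (ENNReal.ofReal_lt_one.2 (exp_lt_one_iff.2 (by norm_num)))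

/-- Deterministic step from Section 4.1: if a Borel measure `μ` on `ℝ` satisfies
`μ([−x,∞)) ≤ x³ e^{√2 x}` for all large `x`, then `∫ e^{−β|x|^{3/2}} dμ < ∞` for
every `β > 0`, i.e. `μ` belongs to the space `M_{3/2}`. -/
theorem integrable_of_tail_bound (μ : Measure ℝ) (x₀ : ℝ) (hx₀ : 0 ≤ x₀)
    (htail : ∀ x : ℝ, x₀ ≤ x →
      μ (Set.Ici (-x)) ≤ ENNReal.ofReal (x ^ 3 * Real.exp (Real.sqrt 2 * x)))
    (β : ℝ) (hβ : 0 < β) :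
    ∫⁻ x : ℝ, ENNReal.ofReal (Real.exp (-β * |x| ^ ((3 : ℝ) / 2))) ∂μ < ⊤ := by
  refine lintegral_exp_neg_mul_abs_rpow_lt_top_of_tail_le_exp μ (c := 3 + √2)
    (fun x hx => (htail x hx).trans (ENNReal.ofReal_le_ofReal ?_)) hβ (by norm_num)
  exact_mod_cast pow_mul_exp_le_exp (hx₀.trans hx) 3 (√2)
end

section
/- Let μ be a Borel measure on ℝ, finite on all compact sets, such that μ([0,∞)) < ∞ and ∫_ℝ e^{−β₀ |x|^{3/2}} dμ(x) < ∞ for some β₀ ∈ (0,1). Then for every t > 0: ∫_ℝ e^{t} · γ_t({z ∈ ℝ : x + z ≥ √2 t}) dμ(x) < ∞. -/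
/-!
By the Chernoff bound, `γ_t([a, ∞)) ≤ e^{-a²/(2t)}` for `a ≥ 0`. A starting point
`x < 0` must travel at least `|x|` to reach `[√2 t, ∞)`, so its contribution is at most
`e^{-x²/(2t)}`, and this is below `e^{-β₀|x|^{3/2}}` as soon as `|x| ≥ (2tβ₀)²`. The integrand
is therefore bounded by the indicator of `[-(2tβ₀)², ∞)`, whose `μ`-mass is finite since `μ` is
finite on compacts and on `[0, ∞)`, plus the integrable weight `e^{-β₀|x|^{3/2}}`.
-/

open Real MeasureTheory ProbabilityTheory Set
open scoped ENNReal NNReal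

lemma hasSubgaussianMGF_id_gaussianReal (v : ℝ≥0) :
    HasSubgaussianMGF id v (gaussianReal 0 v) where
  integrable_exp_mul t := integrable_exp_mul_gaussianReal t
  mgf_le t := by simp [mgf_id_gaussianReal]

lemma gaussianReal_Ici_le (v : ℝ≥0) {a : ℝ} (ha : 0 ≤ a) :
    gaussianReal 0 v (Ici a) ≤ ENNReal.ofReal (exp (-a ^ 2 / (2 * v))) := by
  rw [← ofReal_measureReal]
  exact ENNReal.ofReal_le_ofReal ((hasSubgaussianMGF_id_gaussianReal v).measure_ge_le ha)

lemma gaussianReal_setOf_le_add_le_exp (v : ℝ≥0) {L x : ℝ} (hL : 0 ≤ L) (hx : x ≤ 0) :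
    gaussianReal 0 v {z | L ≤ x + z} ≤ ENNReal.ofReal (exp (-x ^ 2 / (2 * v))) := by
  have hset : {z | L ≤ x + z} = Ici (L - x) := by
    ext z
    simp [add_comm]
  rw [hset]
  refine (gaussianReal_Ici_le v (by linarith)).trans (ENNReal.ofReal_le_ofReal (exp_le_exp.2 ?_))
  rw [neg_div, neg_div, neg_le_neg_iff]
  exact div_le_div_of_nonneg_right (by nlinarith) (by positivity)

lemma mul_rpow_three_halves_le_sq {b s : ℝ} (hb : b ^ 2 ≤ s) : b * s ^ (3 / 2 : ℝ) ≤ s ^ 2 := by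
  have hs : 0 ≤ s := (sq_nonneg b).trans hb
  have hb_le : b ≤ √s :=
    (le_abs_self b).trans (by rw [← sqrt_sq_eq_abs]; exact sqrt_le_sqrt hb)
  calc b * s ^ (3 / 2 : ℝ) ≤ √s * s ^ (3 / 2 : ℝ) := by gcongr
    _ = s ^ 2 := by
      rw [sqrt_eq_rpow, ← rpow_add' hs (by norm_num)]
      norm_num

lemma exp_neg_sq_div_le_exp_neg_mul_rpow {v : ℝ} (hv : 0 < v) (β : ℝ) {x : ℝ}
    (hx : (2 * v * β) ^ 2 ≤ |x|) :
    exp (-x ^ 2 / (2 * v)) ≤ exp (-β * |x| ^ (3 / 2 : ℝ)) := by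
  have key := mul_rpow_three_halves_le_sq hx
  rw [exp_le_exp, neg_div, neg_mul, neg_le_neg_iff, le_div_iff₀ (by positivity), ← sq_abs x]
  linarith

lemma gaussianReal_setOf_le_add_le {v : ℝ≥0} (hv : 0 < v) (β : ℝ) {L : ℝ} (hL : 0 ≤ L)
    (x : ℝ) :
    gaussianReal 0 v {z | L ≤ x + z}
      ≤ (Ici (-(2 * v * β) ^ 2)).indicator 1 x
        + ENNReal.ofReal (exp (-β * |x| ^ (3 / 2 : ℝ))) := by
  rcases le_or_gt (-(2 * v * β) ^ 2) x with hx | hx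
  · rw [indicator_of_mem (mem_Ici.2 hx)]
    exact prob_le_one.trans le_self_add
  · have hx0 : x < 0 := hx.trans_le (neg_nonpos.2 (sq_nonneg _))
    calc gaussianReal 0 v {z | L ≤ x + z}
        ≤ ENNReal.ofReal (exp (-x ^ 2 / (2 * v))) := gaussianReal_setOf_le_add_le_exp v hL hx0.le
      _ ≤ ENNReal.ofReal (exp (-β * |x| ^ (3 / 2 : ℝ))) :=
          ENNReal.ofReal_le_ofReal <| exp_neg_sq_div_le_exp_neg_mul_rpow (by exact_mod_cast hv) β
            (by rw [abs_of_neg hx0]; linarith)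
      _ ≤ _ := le_add_self

lemma measure_Ici_lt_top_of_Ici_zero {μ : Measure ℝ} (hloc : ∀ C : Set ℝ, IsCompact C → μ C < ⊤)
    (hpos : μ (Ici 0) < ⊤) (a : ℝ) : μ (Ici a) < ⊤ := by
  have hsub : Ici a ⊆ Icc a 0 ∪ Ici 0 := fun y hy ↦ (le_total y 0).imp (fun h ↦ ⟨hy, h⟩) id
  exact (measure_mono hsub).trans_lt (measure_union_lt_top (hloc _ isCompact_Icc) hpos)

theorem expected_particles_on_halfline_finite_general
    (μ : Measure ℝ) (hloc : ∀ C : Set ℝ, IsCompact C → μ C < ⊤)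
    (hpos : μ (Set.Ici (0 : ℝ)) < ⊤)
    (β₀ : ℝ)
    (hint : ∫⁻ x : ℝ, ENNReal.ofReal (Real.exp (-β₀ * |x| ^ ((3 : ℝ) / 2))) ∂μ < ⊤)
    (t : ℝ) (ht : 0 < t) :
    ∫⁻ x : ℝ,
        ENNReal.ofReal (Real.exp t) *
          (gaussianReal 0 t.toNNReal) {z : ℝ | Real.sqrt 2 * t ≤ x + z} ∂μ < ⊤ := by
  rw [lintegral_const_mul' _ _ ENNReal.ofReal_ne_top]
  refine ENNReal.mul_lt_top ENNReal.ofReal_lt_top ?_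
  set c := (2 * t.toNNReal * β₀) ^ 2
  calc ∫⁻ x, gaussianReal 0 t.toNNReal {z | √2 * t ≤ x + z} ∂μ
      ≤ ∫⁻ x, ((Ici (-c)).indicator 1 x + ENNReal.ofReal (exp (-β₀ * |x| ^ (3 / 2 : ℝ)))) ∂μ :=
        lintegral_mono (gaussianReal_setOf_le_add_le (Real.toNNReal_pos.2 ht) β₀ (by positivity))
    _ = μ (Ici (-c)) + ∫⁻ x, ENNReal.ofReal (exp (-β₀ * |x| ^ (3 / 2 : ℝ))) ∂μ := by
        rw [lintegral_add_left (measurable_one.indicator measurableSet_Ici),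
          lintegral_indicator_one measurableSet_Ici]
    _ < ⊤ := ENNReal.add_lt_top.2 ⟨measure_Ici_lt_top_of_Ici_zero hloc hpos _, hint⟩

/-- Analytic content (via the many-to-one lemma) of the first half of Proposition 4.2:
if `μ ∈ M_{3/2}` (locally finite, finite on `[0,∞)`, with `∫ e^{−β₀|x|^{3/2}} dμ < ∞`
for some `β₀ ∈ (0,1)`), then for every `t > 0` the expected number of particles on
`ℝ₊` at time `t`, namely `∫ eᵗ · γ_t({z : x + z ≥ √2 t}) dμ(x)`, is finite.  Here
`γ_t` is the centred Gaussian measure of variance `t`. -/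
theorem expected_particles_on_halfline_finite
    (μ : Measure ℝ) (hloc : ∀ C : Set ℝ, IsCompact C → μ C < ⊤)
    (hpos : μ (Set.Ici (0 : ℝ)) < ⊤)
    (β₀ : ℝ) (hβ₀ : β₀ ∈ Set.Ioo (0 : ℝ) 1)
    (hint : ∫⁻ x : ℝ, ENNReal.ofReal (Real.exp (-β₀ * |x| ^ ((3 : ℝ) / 2))) ∂μ < ⊤)
    (t : ℝ) (ht : 0 < t) :
    ∫⁻ x : ℝ,
        ENNReal.ofReal (Real.exp t) *
          (gaussianReal 0 t.toNNReal) {z : ℝ | Real.sqrt 2 * t ≤ x + z} ∂μ < ⊤ :=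
  expected_particles_on_halfline_finite_general μ hloc hpos β₀ hint t ht
end

section
/- Let μ be a Borel measure on ℝ, finite on all compact sets, such that μ([0,∞)) < ∞ and ∫_ℝ e^{−β₀ |x|^{3/2}} dμ(x) < ∞ for some β₀ ∈ (0,1). Then for every t > 0 and every β ∈ (β₀, 1): ∫_ℝ e^{t} · ( ∫_ℝ e^{−β |x + z − √2 t|^{3/2}} dγ_t(z) ) dμ(x) < ∞. -/
/-!
Since `x = (x + z - a) + (a - z)`, a convexity argument gives a constant `K` with
`β₀ |x|^{3/2} ≤ β |x + z - a|^{3/2} + K |z - a|^{3/2}` whenever `β₀ < β`. Hence the inner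
Gaussian integral is at most `e^{-β₀ |x|^{3/2}} ∫ e^{K |z - a|^{3/2}} dγ_t(z)`, and the last
integral is finite by Fernique's theorem because `K u^{3/2}` is eventually dominated by any
`ε u²`. The outer integral is then controlled by the integrability assumption on `μ`.
-/

open Real MeasureTheory ProbabilityTheory

lemma exists_mul_norm_add_rpow_le {E : Type*} [SeminormedAddCommGroup E] {p β₀ β : ℝ}
    (hp : 0 < p) (hβ₀ : 0 < β₀) (hβ₀β : β₀ < β) :
    ∃ K, ∀ x y : E, β₀ * ‖x + y‖ ^ p ≤ β * ‖x‖ ^ p + K * ‖y‖ ^ p := by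
  have hβ : 0 < β := hβ₀.trans hβ₀β
  have hq : 0 < β₀ / β := div_pos hβ₀ hβ
  set s := (β₀ / β) ^ p⁻¹
  have hs : 0 < s := rpow_pos_of_pos hq _
  have hs1 : s < 1 := rpow_lt_one hq.le ((div_lt_one hβ).2 hβ₀β) (inv_pos.2 hp)
  have hsp : β * s ^ p = β₀ := by
    rw [← rpow_mul hq.le, inv_mul_cancel₀ hp.ne', rpow_one, mul_div_cancel₀ _ hβ.ne']
  set c := s / (1 - s)
  have hc : 0 ≤ c := div_nonneg hs.le (by linarith)
  refine ⟨β * c ^ p, fun x y => ?_⟩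
  -- `c` makes `s * (‖x‖ + ‖y‖)` a convex combination of `‖x‖` and `c * ‖y‖`
  have hmax : s * ‖x + y‖ ≤ max ‖x‖ (c * ‖y‖) := by
    have hcs : (1 - s) * c = s := mul_div_cancel₀ _ (by linarith)
    calc s * ‖x + y‖ ≤ s * ‖x‖ + (1 - s) * (c * ‖y‖) := by
          rw [← mul_assoc, hcs, ← mul_add]
          exact mul_le_mul_of_nonneg_left (norm_add_le x y) hs.le
      _ ≤ s * max ‖x‖ (c * ‖y‖) + (1 - s) * max ‖x‖ (c * ‖y‖) := by
          gcongr
          exacts [le_max_left _ _, le_max_right _ _]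
      _ = max ‖x‖ (c * ‖y‖) := by ring
  have hpow : (s * ‖x + y‖) ^ p ≤ ‖x‖ ^ p + (c * ‖y‖) ^ p := by
    calc (s * ‖x + y‖) ^ p ≤ (max ‖x‖ (c * ‖y‖)) ^ p := by gcongr
      _ ≤ ‖x‖ ^ p + (c * ‖y‖) ^ p := by
          rcases max_cases ‖x‖ (c * ‖y‖) with ⟨h, -⟩ | ⟨h, -⟩ <;> rw [h]
          · have := rpow_nonneg (mul_nonneg hc (norm_nonneg y)) p; linarith
          · have := rpow_nonneg (norm_nonneg x) p; linarith
  rw [mul_rpow hs.le (norm_nonneg _), mul_rpow hc (norm_nonneg _)] at hpow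
  calc β₀ * ‖x + y‖ ^ p = β * (s ^ p * ‖x + y‖ ^ p) := by rw [← hsp]; ring
    _ ≤ β * (‖x‖ ^ p + c ^ p * ‖y‖ ^ p) := by gcongr
    _ = β * ‖x‖ ^ p + β * c ^ p * ‖y‖ ^ p := by ring

lemma exists_mul_rpow_three_halves_le (K : ℝ) {ε : ℝ} (hε : 0 < ε) :
    ∃ D, ∀ u : ℝ, 0 ≤ u → K * u ^ ((3 : ℝ) / 2) ≤ ε * u ^ 2 + D := by
  refine ⟨K ^ 4 / ε ^ 3, fun u hu => ?_⟩
  have hw : u ^ ((3 : ℝ) / 2) = √u ^ 3 := by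
    rw [sqrt_eq_rpow, ← rpow_natCast, ← rpow_mul hu]; norm_num
  have hu2 : u ^ 2 = √u ^ 4 := by
    rw [show (4 : ℕ) = 2 * 2 from rfl, pow_mul, sq_sqrt hu]
  rw [hw, hu2, ← sub_nonneg]
  -- AM-GM in the form `a³ b ≤ a⁴ + b⁴` with `a = ε √u` and `b = K`
  have key : 0 ≤ (ε * √u) ^ 4 + K ^ 4 - (ε * √u) ^ 3 * K := by
    nlinarith [sq_nonneg ((ε * √u) - K), sq_nonneg ((ε * √u) + K), sq_nonneg (ε * √u),
      sq_nonneg K, mul_nonneg (sq_nonneg (ε * √u - K)) (sq_nonneg (ε * √u + K))]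
  have : ε * √u ^ 4 + K ^ 4 / ε ^ 3 - K * √u ^ 3
      = ((ε * √u) ^ 4 + K ^ 4 - (ε * √u) ^ 3 * K) / ε ^ 3 := by
    field_simp
  rw [this]; positivity

lemma IsGaussian.integrable_exp_mul_norm_sub_rpow_three_halves {E : Type*} [NormedAddCommGroup E]
    [NormedSpace ℝ E] [CompleteSpace E] [SecondCountableTopology E] [MeasurableSpace E]
    [BorelSpace E]
    (γ : Measure E) [IsGaussian γ] (K : ℝ) (a : E) :
    Integrable (fun x => exp (K * ‖x - a‖ ^ ((3 : ℝ) / 2))) γ := by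
  obtain ⟨C, hC, hint⟩ := IsGaussian.exists_integrable_exp_sq γ
  obtain ⟨D, hD⟩ := exists_mul_rpow_three_halves_le K (half_pos hC)
  refine (hint.const_mul (exp (C * ‖a‖ ^ 2 + D))).mono' (by fun_prop (disch := norm_num)) ?_
  refine Filter.Eventually.of_forall fun x => ?_
  rw [norm_of_nonneg (exp_nonneg _), ← exp_add, exp_le_exp]
  have hsq : ‖x - a‖ ^ 2 ≤ 2 * ‖x‖ ^ 2 + 2 * ‖a‖ ^ 2 := by
    nlinarith [norm_sub_le x a, norm_nonneg (x - a), sq_nonneg (‖x‖ - ‖a‖)]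
  nlinarith [hD _ (norm_nonneg (x - a))]

lemma lintegral_exp_neg_mul_abs_add_sub_rpow_le (γ : Measure ℝ) {p β₀ β K : ℝ}
    (hK : ∀ x y : ℝ, β₀ * |x + y| ^ p ≤ β * |x| ^ p + K * |y| ^ p) (x a : ℝ) :
    ∫⁻ z, ENNReal.ofReal (exp (-β * |x + z - a| ^ p)) ∂γ
      ≤ ENNReal.ofReal (exp (-β₀ * |x| ^ p)) *
          ∫⁻ z, ENNReal.ofReal (exp (K * |z - a| ^ p)) ∂γ := by
  rw [← lintegral_const_mul' _ _ ENNReal.ofReal_ne_top]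
  refine lintegral_mono fun z => ?_
  rw [← ENNReal.ofReal_mul (exp_nonneg _), ← exp_add]
  refine ENNReal.ofReal_le_ofReal (exp_le_exp.2 ?_)
  have := hK (x + z - a) (a - z)
  rw [abs_sub_comm a z, show x + z - a + (a - z) = x by ring] at this
  linarith

theorem expected_weight_finite_general
    (μ : Measure ℝ)
    (β₀ : ℝ) (hβ₀ : β₀ ∈ Set.Ioo (0 : ℝ) 1)
    (hint : ∫⁻ x : ℝ, ENNReal.ofReal (Real.exp (-β₀ * |x| ^ ((3 : ℝ) / 2))) ∂μ < ⊤)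
    (t : ℝ) (β : ℝ) (hβ : β ∈ Set.Ioo β₀ 1) :
    ∫⁻ x : ℝ,
        ENNReal.ofReal (Real.exp t) *
          ∫⁻ z : ℝ,
            ENNReal.ofReal
              (Real.exp (-β * |x + z - Real.sqrt 2 * t| ^ ((3 : ℝ) / 2)))
            ∂(gaussianReal 0 t.toNNReal) ∂μ < ⊤ := by
  set γ := gaussianReal 0 t.toNNReal
  set a := √2 * t
  obtain ⟨K, hK⟩ := exists_mul_norm_add_rpow_le (E := ℝ) (by norm_num : (0 : ℝ) < 3 / 2)
    hβ₀.1 hβ.1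
  simp only [Real.norm_eq_abs] at hK
  set w := fun x : ℝ => ENNReal.ofReal (exp (-β₀ * |x| ^ ((3 : ℝ) / 2)))
  set I := ∫⁻ z, ENNReal.ofReal (exp (K * |z - a| ^ ((3 : ℝ) / 2))) ∂γ
  have hI : I < ⊤ := by
    simpa only [Real.norm_eq_abs] using
      (IsGaussian.integrable_exp_mul_norm_sub_rpow_three_halves γ K a).lintegral_lt_top
  have hinner (x : ℝ) : ∫⁻ z, ENNReal.ofReal (exp (-β * |x + z - a| ^ ((3 : ℝ) / 2))) ∂γ
      ≤ w x * I :=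
    lintegral_exp_neg_mul_abs_add_sub_rpow_le γ hK x a
  calc _ ≤ ∫⁻ x, ENNReal.ofReal (exp t) * I * w x ∂μ :=
        lintegral_mono fun x => by
          rw [mul_assoc, mul_comm I]; exact mul_le_mul_right (hinner x) _
    _ = ENNReal.ofReal (exp t) * I * ∫⁻ x, w x ∂μ :=
        lintegral_const_mul' _ _ (ENNReal.mul_ne_top ENNReal.ofReal_ne_top hI.ne)
    _ < ⊤ := ENNReal.mul_lt_top (ENNReal.mul_lt_top ENNReal.ofReal_lt_top hI) hint

/-- Analytic content (via the many-to-one lemma) of the second half of Proposition 4.2: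
if `μ ∈ M_{3/2}` (locally finite, finite on `[0,∞)`, with `∫ e^{−β₀|x|^{3/2}} dμ < ∞`
for some `β₀ ∈ (0,1)`), then for every `t > 0` and every `β ∈ (β₀, 1)`,
`∫ eᵗ · (∫ e^{−β|x + z − √2 t|^{3/2}} dγ_t(z)) dμ(x) < ∞`, where `γ_t` is the centred
Gaussian measure of variance `t`. -/
theorem expected_weight_finite
    (μ : Measure ℝ) (hloc : ∀ C : Set ℝ, IsCompact C → μ C < ⊤)
    (hpos : μ (Set.Ici (0 : ℝ)) < ⊤)
    (β₀ : ℝ) (hβ₀ : β₀ ∈ Set.Ioo (0 : ℝ) 1)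
    (hint : ∫⁻ x : ℝ, ENNReal.ofReal (Real.exp (-β₀ * |x| ^ ((3 : ℝ) / 2))) ∂μ < ⊤)
    (t : ℝ) (ht : 0 < t) (β : ℝ) (hβ : β ∈ Set.Ioo β₀ 1) :
    ∫⁻ x : ℝ,
        ENNReal.ofReal (Real.exp t) *
          ∫⁻ z : ℝ,
            ENNReal.ofReal
              (Real.exp (-β * |x + z - Real.sqrt 2 * t| ^ ((3 : ℝ) / 2)))
            ∂(gaussianReal 0 t.toNNReal) ∂μ < ⊤ :=
  expected_weight_finite_general μ β₀ hβ₀ hint t β hβ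
end
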